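/- Let G = (V,A) be a finite simple graph without isolated vertices and n = n(G) = W ⊕ z its graph algebra over a field k of characteristic zero. If G has a vertex e of degree 1, with α the unique edge incident to e, then e∧α is a nonzero n-invariant element of W∧z ⊆ Λ²n; in particular (Λ²n)^n ≠ Λ²z. -/

import Mathlib

open TensorProduct

set_option synthInstance.maxHeartbeats 1000000
set_option maxHeartbeats 1000000

/-- The adjoint action of a Lie algebra `g` on `g ⊗ g`, determined by
`x · (a ⊗ b) = ⁅x,a⁆ ⊗ b + a ⊗ ⁅x,b⁆`. -/
noncomputable def tAct (k g : Type*) [CommRing k] [LieRing g] [LieAlgebra k g] (x : g) :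
    g ⊗[k] g →ₗ[k] g ⊗[k] g :=
  TensorProduct.map (LieAlgebra.ad k g x) LinearMap.id
    + TensorProduct.map LinearMap.id (LieAlgebra.ad k g x)

/-- For submodules `P Q ⊆ g`, the image of `P ⊗ Q` in `g ⊗ g`. -/
noncomputable def tsub (k g : Type*) [CommRing k] [AddCommGroup g] [Module k g]
    (P Q : Submodule k g) : Submodule k (g ⊗[k] g) :=
  LinearMap.range (TensorProduct.map P.subtype Q.subtype)

/-- The degree (valency) of a vertex `e` in the graph with edge set `A` and
endpoint maps `src`, `tgt`. -/
def deg {V A : Type*} [Fintype A] [DecidableEq V] (src tgt : A → V) (e : V) : ℕ :=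
  (Finset.univ.filter (fun a : A => src a = e ∨ tgt a = e)).card

/-!
A vertex `e` of degree one, with incident edge `α`, brackets every basis vector into `k ∙ α`:
`⁅e, e_i⁆ = ±α` if `i` is the other end of `α`, and `0` otherwise. Since `α` is central,
`x · (e ⊗ α − α ⊗ e) = ⁅x,e⁆ ⊗ α − α ⊗ ⁅x,e⁆` is a multiple of `α ⊗ α − α ⊗ α = 0`.
The coordinate of `e ⊗ α − α ⊗ e` at the basis tensor `e ⊗ α` is `1`, whereas it vanishes
on all of `z ⊗ z`; this gives both `e ∧ α ≠ 0` and `e ∧ α ∉ Λ²z`.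
-/

section Tensor

variable {k M ι : Type*} [CommRing k] [AddCommGroup M] [Module k M]

theorem tmul_mem_tsub {P Q : Submodule k M} {p q : M} (hp : p ∈ P) (hq : q ∈ Q) :
    p ⊗ₜ[k] q ∈ tsub k M P Q :=
  ⟨⟨p, hp⟩ ⊗ₜ ⟨q, hq⟩, rfl⟩

theorem Module.Basis.repr_eq_zero_of_mem_span_range_comp {κ : Type*} (B : Module.Basis ι k M)
    {f : κ → ι} {i : ι} (hi : i ∉ Set.range f) {p : M}
    (hp : p ∈ Submodule.span k (Set.range (B ∘ f))) : B.repr p i = 0 := by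
  rw [Set.range_comp, B.mem_span_image] at hp
  exact Finsupp.notMem_support_iff.mp fun h => hi (hp h)

theorem Module.Basis.tensorProduct_repr_eq_zero_of_mem_tsub (B : Module.Basis ι k M)
    {P Q : Submodule k M} {i : ι} (hP : ∀ p ∈ P, B.repr p i = 0) (j : ι) {t : M ⊗[k] M}
    (ht : t ∈ tsub k M P Q) : (B.tensorProduct B).repr t (i, j) = 0 := by
  obtain ⟨t, rfl⟩ := ht
  induction t using TensorProduct.induction_on with
  | zero => simp
  | tmul p q => simp [hP p p.2]
  | add s t hs ht => simp [hs, ht]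

theorem Module.Basis.tmul_sub_tmul_notMem_tsub [Nontrivial k] (B : Module.Basis ι k M)
    {P Q : Submodule k M} {i j : ι} (hij : i ≠ j) (hP : ∀ p ∈ P, B.repr p i = 0) :
    B i ⊗ₜ[k] B j - B j ⊗ₜ[k] B i ∉ tsub k M P Q := by
  intro hmem
  have hcoord := B.tensorProduct_repr_eq_zero_of_mem_tsub hP j hmem
  simp [hij.symm] at hcoord

end Tensor

section LieAction

variable {k g : Type*} [CommRing k] [LieRing g] [LieAlgebra k g]

theorem tAct_tmul (x a b : g) : tAct k g x (a ⊗ₜ[k] b) = ⁅x, a⁆ ⊗ₜ b + a ⊗ₜ ⁅x, b⁆ := rfl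

theorem tAct_tmul_sub_tmul_eq_zero {x w z : g} (hz : ∀ y : g, ⁅z, y⁆ = 0)
    (hw : ⁅w, x⁆ ∈ k ∙ z) : tAct k g x (w ⊗ₜ[k] z - z ⊗ₜ[k] w) = 0 := by
  obtain ⟨c, hc⟩ := Submodule.mem_span_singleton.mp hw
  have hxw : ⁅x, w⁆ = -(c • z) := by rw [hc, lie_skew]
  have hxz : ⁅x, z⁆ = 0 := by rw [← lie_skew, hz, neg_zero]
  rw [map_sub, tAct_tmul, tAct_tmul, hxw, hxz]
  simp only [tmul_zero, zero_tmul, add_zero, zero_add, neg_tmul, tmul_neg, smul_tmul]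
  abel

theorem Module.Basis.lie_mem_of_forall_lie_basis_mem {ι : Type*} (B : Module.Basis ι k g)
    {w : g} {M : Submodule k g} (h : ∀ i, ⁅w, B i⁆ ∈ M) (x : g) : ⁅w, x⁆ ∈ M := by
  have hspan := (Submodule.map_span_le (LieAlgebra.ad k g w) (Set.range B) M).2
    (by rintro _ ⟨i, rfl⟩; exact h i)
  rw [B.span_eq] at hspan
  exact hspan ⟨x, trivial, rfl⟩

end LieAction

section GraphAlgebra

variable {k V A N : Type*} [Field k] [Fintype A] [DecidableEq V] [LieRing N] [LieAlgebra k N]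
  {src tgt : A → V}

theorem eq_of_incident_of_deg_eq_one {e : V} (he : deg src tgt e = 1) {a b : A}
    (ha : src a = e ∨ tgt a = e) (hb : src b = e ∨ tgt b = e) : a = b :=
  Finset.card_le_one.mp he.le a (by simpa using ha) b (by simpa using hb)

theorem lie_leaf_mem_span_edge (B : Module.Basis (V ⊕ A) k N)
    (hbz : ∀ (a : A) (x : N), ⁅B (Sum.inr a), x⁆ = 0)
    (hbe : ∀ a : A, ⁅B (Sum.inl (src a)), B (Sum.inl (tgt a))⁆ = B (Sum.inr a))
    (hbe0 : ∀ i j : V,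
      (∀ a : A, ¬((src a = i ∧ tgt a = j) ∨ (src a = j ∧ tgt a = i))) →
      ⁅B (Sum.inl i), B (Sum.inl j)⁆ = 0)
    {e : V} (he : deg src tgt e = 1) {α : A} (hα : src α = e ∨ tgt α = e) (x : N) :
    ⁅B (Sum.inl e), x⁆ ∈ k ∙ B (Sum.inr α) := by
  refine B.lie_mem_of_forall_lie_basis_mem (fun v => ?_) x
  rcases v with i | a
  · by_cases hjoin : ∃ a : A, (src a = e ∧ tgt a = i) ∨ (src a = i ∧ tgt a = e)
    · obtain ⟨a, hsrc | htgt⟩ := hjoin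
      · obtain rfl := eq_of_incident_of_deg_eq_one he (Or.inl hsrc.1) hα
        rw [← hsrc.1, ← hsrc.2, hbe]
        exact Submodule.mem_span_singleton_self _
      · obtain rfl := eq_of_incident_of_deg_eq_one he (Or.inr htgt.2) hα
        rw [← htgt.1, ← htgt.2, ← lie_skew, hbe]
        exact neg_mem (Submodule.mem_span_singleton_self _)
    · rw [hbe0 e i (fun a ha => hjoin ⟨a, ha⟩)]
      exact zero_mem _
  · rw [← lie_skew, hbz, neg_zero]
    exact zero_mem _

end GraphAlgebra

theorem stmt8_general (k V A N : Type*) [Field k]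
    [Fintype A] [DecidableEq V]
    [LieRing N] [LieAlgebra k N]
    (src tgt : A → V)
    (B : Module.Basis (V ⊕ A) k N)
    (hbz : ∀ (a : A) (x : N), ⁅B (Sum.inr a), x⁆ = 0)
    (hbe : ∀ a : A, ⁅B (Sum.inl (src a)), B (Sum.inl (tgt a))⁆ = B (Sum.inr a))
    (hbe0 : ∀ i j : V,
      (∀ a : A, ¬((src a = i ∧ tgt a = j) ∨ (src a = j ∧ tgt a = i))) →
      ⁅B (Sum.inl i), B (Sum.inl j)⁆ = 0)
    (e : V) (he : deg src tgt e = 1)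
    (α : A) (hα : src α = e ∨ tgt α = e) :
    (B (Sum.inl e) ⊗ₜ[k] B (Sum.inr α) - B (Sum.inr α) ⊗ₜ[k] B (Sum.inl e)) ≠ 0
    ∧ (∀ x : N,
        tAct k N x (B (Sum.inl e) ⊗ₜ[k] B (Sum.inr α) - B (Sum.inr α) ⊗ₜ[k] B (Sum.inl e)) = 0)
    ∧ (B (Sum.inl e) ⊗ₜ[k] B (Sum.inr α) - B (Sum.inr α) ⊗ₜ[k] B (Sum.inl e)
        ∈ tsub k N (Submodule.span k (Set.range fun i : V => B (Sum.inl i)))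
            (Submodule.span k (Set.range fun a : A => B (Sum.inr a)))
          ⊔ tsub k N (Submodule.span k (Set.range fun a : A => B (Sum.inr a)))
            (Submodule.span k (Set.range fun i : V => B (Sum.inl i))))
    ∧ (B (Sum.inl e) ⊗ₜ[k] B (Sum.inr α) - B (Sum.inr α) ⊗ₜ[k] B (Sum.inl e)
        ∉ tsub k N (Submodule.span k (Set.range fun a : A => B (Sum.inr a)))
            (Submodule.span k (Set.range fun a : A => B (Sum.inr a)))) := by
  have hnot : B (Sum.inl e) ⊗ₜ[k] B (Sum.inr α) - B (Sum.inr α) ⊗ₜ[k] B (Sum.inl e) ∉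
      tsub k N (Submodule.span k (Set.range fun a : A => B (Sum.inr a)))
        (Submodule.span k (Set.range fun a : A => B (Sum.inr a))) :=
    B.tmul_sub_tmul_notMem_tsub Sum.inl_ne_inr
      (fun _ => B.repr_eq_zero_of_mem_span_range_comp (by simp))
  refine ⟨fun h0 => hnot (h0 ▸ zero_mem _),
    fun x => tAct_tmul_sub_tmul_eq_zero (hbz α) (lie_leaf_mem_span_edge B hbz hbe hbe0 he hα x),
    ?_, hnot⟩
  have hW : B (Sum.inl e) ∈ Submodule.span k (Set.range fun i : V => B (Sum.inl i)) :=
    Submodule.subset_span ⟨e, rfl⟩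
  have hZ : B (Sum.inr α) ∈ Submodule.span k (Set.range fun a : A => B (Sum.inr a)) :=
    Submodule.subset_span ⟨α, rfl⟩
  exact sub_mem (Submodule.mem_sup_left (tmul_mem_tsub hW hZ))
    (Submodule.mem_sup_right (tmul_mem_tsub hZ hW))

/-- in the graph algebra `n(G) = W ⊕ z` of a finite simple graph without
isolated vertices (presented by a basis indexed by vertices and edges, with
`⁅e_i, e_j⁆ = α` for each edge `α` joining `i` and `j`), if `e` is a vertex of degree 1
and `α` its unique incident edge, then `e∧α` (as the antisymmetric tensor
`e ⊗ α − α ⊗ e`) is a nonzero invariant element of `W∧z`; in particular it is not in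
`Λ²z`, so `(Λ²n)^n ≠ Λ²z`. -/
theorem stmt8 (k V A N : Type*) [Field k] [CharZero k]
    [Fintype V] [Fintype A] [DecidableEq V] [DecidableEq A]
    [LieRing N] [LieAlgebra k N]
    (src tgt : A → V)
    (hloop : ∀ a, src a ≠ tgt a)
    (hsimple : ∀ a b : A,
      (src a = src b ∧ tgt a = tgt b) ∨ (src a = tgt b ∧ tgt a = src b) → a = b)
    (B : Module.Basis (V ⊕ A) k N)
    (hbz : ∀ (a : A) (x : N), ⁅B (Sum.inr a), x⁆ = 0)
    (hbe : ∀ a : A, ⁅B (Sum.inl (src a)), B (Sum.inl (tgt a))⁆ = B (Sum.inr a))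
    (hbe0 : ∀ i j : V,
      (∀ a : A, ¬((src a = i ∧ tgt a = j) ∨ (src a = j ∧ tgt a = i))) →
      ⁅B (Sum.inl i), B (Sum.inl j)⁆ = 0)
    (hnoiso : ∀ e : V, 0 < deg src tgt e)
    (e : V) (he : deg src tgt e = 1)
    (α : A) (hα : src α = e ∨ tgt α = e) :
    (B (Sum.inl e) ⊗ₜ[k] B (Sum.inr α) - B (Sum.inr α) ⊗ₜ[k] B (Sum.inl e)) ≠ 0
    ∧ (∀ x : N,
        tAct k N x (B (Sum.inl e) ⊗ₜ[k] B (Sum.inr α) - B (Sum.inr α) ⊗ₜ[k] B (Sum.inl e)) = 0)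
    ∧ (B (Sum.inl e) ⊗ₜ[k] B (Sum.inr α) - B (Sum.inr α) ⊗ₜ[k] B (Sum.inl e)
        ∈ tsub k N (Submodule.span k (Set.range fun i : V => B (Sum.inl i)))
            (Submodule.span k (Set.range fun a : A => B (Sum.inr a)))
          ⊔ tsub k N (Submodule.span k (Set.range fun a : A => B (Sum.inr a)))
            (Submodule.span k (Set.range fun i : V => B (Sum.inl i))))
    ∧ (B (Sum.inl e) ⊗ₜ[k] B (Sum.inr α) - B (Sum.inr α) ⊗ₜ[k] B (Sum.inl e)
        ∉ tsub k N (Submodule.span k (Set.range fun a : A => B (Sum.inr a)))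
            (Submodule.span k (Set.range fun a : A => B (Sum.inr a)))) :=
  stmt8_general k V A N src tgt B hbz hbe hbe0 e he α hα
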